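/- arXiv:2001.03480 — 2 statements merged into one kernel-verified Lean document; each statement's English description precedes it below -/
import Mathlib

section
/- In a free group F, if x₁, x₂ are distinct elements, y₁, y₂ are distinct elements, and there exist α, β, γ, α', β' ∈ F and elements x₁', x₂', y₁', y₂' ∈ F such that xᵢ * α * yⱼ * β = γ * yⱼ' * α' * xᵢ' * β' for all i ∈ {1,2} and j ∈ {1,2}, then there exists a primitive element p ∈ F and integers r, s with x₁ * α = x₂ * α * p^r and y₁ = p^s * y₂. -/
/-!
Put `v = y₁ * y₂⁻¹` and `b = α⁻¹ * x₂⁻¹ * x₁ * α`. Comparing the equations pairwise gives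
`x₁ α v α⁻¹ x₁⁻¹ = γ y₁' y₂'⁻¹ γ⁻¹ = x₂ α v α⁻¹ x₂⁻¹`, so `b` commutes with `v ≠ 1`.
In a free group the centralizer of a nontrivial element is generated by a primitive element:
it is free by Nielsen–Schreier, and abelian because commutation is transitive on nontrivial
elements (two commuting elements generate an abelian, hence cyclic, free subgroup, and roots are
unique since free groups are torsion-free). Thus `b` and `v` are both powers of one primitive `p`.
-/

open scoped Pointwise

/-- An element `p` of a free group is primitive if it is nontrivial and its only
roots are `p` itself and `p⁻¹`. -/
def IsPrimitiveElt {A : Type*} (p : FreeGroup A) : Prop :=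
  p ≠ 1 ∧ ∀ (w : FreeGroup A) (l : ℤ), w ^ l = p → w = p ∨ w = p⁻¹

/-- The coset `v·⟨p⟩ = {v * p^k : k ∈ ℤ}`. -/
def coset {A : Type*} (v p : FreeGroup A) : Set (FreeGroup A) :=
  {x | ∃ k : ℤ, x = v * p ^ k}

/-- A free group element is cyclically reduced if its reduced word does not begin
and end with mutually inverse letters. -/
def CyclicallyReduced {A : Type*} [DecidableEq A] (w : FreeGroup A) : Prop :=
  ∀ x y : A × Bool, w.toWord.head? = some x → w.toWord.getLast? = some y →
    ¬(x.1 = y.1 ∧ x.2 = !y.2)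

open Subgroup

theorem FreeGroup.eq_of_commute_of_of {X : Type*} {i j : X}
    (h : Commute (FreeGroup.of i) (FreeGroup.of j)) : i = j := by
  classical
  have hword := congrArg FreeGroup.toWord h.eq
  simp only [toWord_mul, toWord_of, List.singleton_append, reduce, Bool.not_true,
    Bool.true_eq_false, and_false, if_false, List.cons.injEq, Prod.mk.injEq, and_true] at hword
  exact hword.1

instance FreeGroup.isCyclic_of_subsingleton {X : Type*} [Subsingleton X] :
    IsCyclic (FreeGroup X) := by
  cases isEmpty_or_nonempty X
  · infer_instance
  · have := uniqueOfSubsingleton (Classical.arbitrary X)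
    infer_instance

theorem IsFreeGroup.isCyclic_of_isMulCommutative (G : Type*) [Group G] [IsFreeGroup G]
    [IsMulCommutative G] : IsCyclic G := by
  let e := IsFreeGroup.toFreeGroup G
  have : Subsingleton (IsFreeGroup.Generators G) := ⟨fun i j ↦
    FreeGroup.eq_of_commute_of_of <| by
      simpa using (Commute.map (mul_comm' (e.symm (.of i)) (e.symm (.of j))) e)⟩
  exact isCyclic_of_surjective e.symm e.symm.surjective

theorem FreeGroup.exists_zpowers_eq_of_isMulCommutative {A : Type*} (H : Subgroup (FreeGroup A))
    [IsMulCommutative H] : ∃ d, zpowers d = H :=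
  (H.isCyclic_iff_exists_zpowers_eq_top).mp (IsFreeGroup.isCyclic_of_isMulCommutative H)

theorem FreeGroup.exists_mem_zpowers_of_commute {A : Type*} {a b : FreeGroup A}
    (h : Commute a b) : ∃ d, a ∈ zpowers d ∧ b ∈ zpowers d := by
  have : IsMulCommutative (closure {a, b}) := isMulCommutative_closure <| by
    simp only [Set.mem_insert_iff, Set.mem_singleton_iff]
    rintro x (rfl | rfl) y (rfl | rfl)
    exacts [rfl, h.eq, h.eq.symm, rfl]
  obtain ⟨d, hd⟩ := exists_zpowers_eq_of_isMulCommutative (closure {a, b})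
  exact ⟨d, hd ▸ subset_closure (by simp), hd ▸ subset_closure (by simp)⟩

theorem Commute.of_zpow_left {G : Type*} [Group G] [IsMulTorsionFree G] {a b : G} {n : ℤ}
    (hn : n ≠ 0) (h : Commute (a ^ n) b) : Commute a b := by
  have hconj : (b⁻¹ * a * b) ^ n = a ^ n := by
    rw [show b⁻¹ * a * b = b⁻¹ * a * b⁻¹⁻¹ by rw [inv_inv], conj_zpow, inv_inv, mul_assoc,
      h.eq, inv_mul_cancel_left]
  have := zpow_left_injective hn hconj
  rw [mul_assoc, inv_mul_eq_iff_eq_mul] at this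
  exact this

theorem FreeGroup.commute_trans {A : Type*} {a b c : FreeGroup A} (hb : b ≠ 1)
    (hab : Commute a b) (hbc : Commute b c) : Commute a c := by
  obtain ⟨d, ⟨i, rfl⟩, ⟨m, rfl⟩⟩ := exists_mem_zpowers_of_commute hab
  have hm : m ≠ 0 := by rintro rfl; simp at hb
  exact (hbc.of_zpow_left hm).zpow_left i

theorem FreeGroup.isMulCommutative_centralizer {A : Type*} {g : FreeGroup A} (hg : g ≠ 1) :
    IsMulCommutative (centralizer {g}) :=
  IsMulCommutative.of_comm fun a b ↦ Subtype.ext <|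
    (commute_trans hg (mem_centralizer_singleton_iff.mp a.2)
      (mem_centralizer_singleton_iff.mp b.2).symm).eq

theorem FreeGroup.exists_isPrimitiveElt_zpowers_eq_centralizer {A : Type*} {g : FreeGroup A}
    (hg : g ≠ 1) : ∃ p, IsPrimitiveElt p ∧ zpowers p = centralizer {g} := by
  have := isMulCommutative_centralizer hg
  obtain ⟨p, hp⟩ := exists_zpowers_eq_of_isMulCommutative (centralizer {g})
  have hg_mem : g ∈ zpowers p := hp ▸ mem_centralizer_singleton_iff.mpr rfl
  have hp1 : p ≠ 1 := by
    rintro rfl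
    exact hg (by simpa using hg_mem)
  refine ⟨p, ⟨hp1, fun w l hwl ↦ ?_⟩, hp⟩
  have hwp : Commute w p := hwl ▸ Commute.self_zpow w l
  have hpg : Commute p g := mem_centralizer_singleton_iff.mp (hp ▸ mem_zpowers p)
  obtain ⟨j, rfl⟩ : w ∈ zpowers p := hp ▸ mem_centralizer_singleton_iff.mpr
    (commute_trans hp1 hwp hpg).eq
  have hjl : j * l = 1 := by
    have : p ^ (j * l - 1) = 1 := by rw [zpow_sub_one, zpow_mul, hwl, mul_inv_cancel]
    rw [IsMulTorsionFree.zpow_eq_one_iff_right hp1] at this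
    omega
  rcases Int.eq_one_or_neg_one_of_mul_eq_one hjl with rfl | rfl <;> simp

theorem stmt2_general {A : Type*} (x₁ x₂ y₁ y₂ : FreeGroup A) (hy : y₁ ≠ y₂)
    (α β γ α' β' x₁' x₂' y₁' y₂' : FreeGroup A)
    (h11 : x₁ * α * y₁ * β = γ * y₁' * α' * x₁' * β')
    (h12 : x₁ * α * y₂ * β = γ * y₂' * α' * x₁' * β')
    (h21 : x₂ * α * y₁ * β = γ * y₁' * α' * x₂' * β')
    (h22 : x₂ * α * y₂ * β = γ * y₂' * α' * x₂' * β') :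
    ∃ p : FreeGroup A, IsPrimitiveElt p ∧
      ∃ r s : ℤ, x₁ * α = x₂ * α * p ^ r ∧ y₁ = p ^ s * y₂ := by
  have hconj : x₁ * α * (y₁ * y₂⁻¹) * α⁻¹ * x₁⁻¹ = x₂ * α * (y₁ * y₂⁻¹) * α⁻¹ * x₂⁻¹ :=
    calc _ = (x₁ * α * y₁ * β) * (x₁ * α * y₂ * β)⁻¹ := by group
      _ = γ * (y₁' * y₂'⁻¹) * γ⁻¹ := by rw [h11, h12]; group
      _ = (x₂ * α * y₁ * β) * (x₂ * α * y₂ * β)⁻¹ := by rw [h21, h22]; group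
      _ = _ := by group
  have hcomm : Commute (α⁻¹ * x₂⁻¹ * x₁ * α) (y₁ * y₂⁻¹) :=
    calc α⁻¹ * x₂⁻¹ * x₁ * α * (y₁ * y₂⁻¹)
        = α⁻¹ * x₂⁻¹ * (x₁ * α * (y₁ * y₂⁻¹) * α⁻¹ * x₁⁻¹) * x₁ * α := by group
      _ = α⁻¹ * x₂⁻¹ * (x₂ * α * (y₁ * y₂⁻¹) * α⁻¹ * x₂⁻¹) * x₁ * α := by rw [hconj]
      _ = y₁ * y₂⁻¹ * (α⁻¹ * x₂⁻¹ * x₁ * α) := by group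
  obtain ⟨p, hp, hcent⟩ :=
    FreeGroup.exists_isPrimitiveElt_zpowers_eq_centralizer (mul_inv_eq_one.not.mpr hy)
  obtain ⟨r, hr⟩ := mem_zpowers_iff.mp
    (hcent ▸ mem_centralizer_singleton_iff.mpr hcomm.eq : α⁻¹ * x₂⁻¹ * x₁ * α ∈ zpowers p)
  obtain ⟨s, hs⟩ := mem_zpowers_iff.mp
    (hcent ▸ mem_centralizer_singleton_iff.mpr rfl : y₁ * y₂⁻¹ ∈ zpowers p)
  refine ⟨p, hp, r, s, ?_, ?_⟩
  · rw [hr]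
    group
  · rw [hs, inv_mul_cancel_right]

theorem stmt2 {A : Type*} (x₁ x₂ y₁ y₂ : FreeGroup A) (hx : x₁ ≠ x₂) (hy : y₁ ≠ y₂)
    (α β γ α' β' x₁' x₂' y₁' y₂' : FreeGroup A)
    (h11 : x₁ * α * y₁ * β = γ * y₁' * α' * x₁' * β')
    (h12 : x₁ * α * y₂ * β = γ * y₂' * α' * x₁' * β')
    (h21 : x₂ * α * y₁ * β = γ * y₁' * α' * x₂' * β')
    (h22 : x₂ * α * y₂ * β = γ * y₂' * α' * x₂' * β') :
    ∃ p : FreeGroup A, IsPrimitiveElt p ∧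
      ∃ r s : ℤ, x₁ * α = x₂ * α * p ^ r ∧ y₁ = p ^ s * y₂ :=
  stmt2_general x₁ x₂ y₁ y₂ hy α β γ α' β' x₁' x₂' y₁' y₂' h11 h12 h21 h22
end

section
/- Let F be a free group and α the periodicity abstraction (α(∅)=∅, α({g})={g}, α(L)=g·⟨p⟩ if |L|≥2 and L ⊆ g·⟨p⟩ with p primitive, else α(L)=F). Then α(L₁ · L₂) = α(α(L₁) · α(L₂)) for all L₁, L₂ ⊆ F, where L₁·L₂ is the elementwise product. -/
open scoped Pointwise

open scoped Classical in
/-- The periodicity abstraction. -/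
noncomputable def alpha {A : Type*} (L : Set (FreeGroup A)) : Set (FreeGroup A) :=
  if L = ∅ then ∅
  else if ∃ g : FreeGroup A, L = {g} then L
  else if h : ∃ g p : FreeGroup A, IsPrimitiveElt p ∧ L ⊆ coset g p then
    coset h.choose h.choose_spec.choose
  else Set.univ

/-!
`alpha` behaves like a closure operator: `L ⊆ alpha L`, and `alpha N = alpha M` whenever
`M ⊆ N ⊆ alpha M`. Applied to `M = L₁ * L₂` and `N = alpha L₁ * alpha L₂`, it remains to show
`alpha L₁ * alpha L₂ ⊆ alpha (L₁ * L₂)`. The only nontrivial case is `L₁ * L₂ ⊆ g⟨p⟩`: then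
`L₁ ⊆ g b⁻¹ ⟨b p b⁻¹⟩` and `L₂ ⊆ a⁻¹ g ⟨p⟩` for any `a ∈ L₁`, `b ∈ L₂`, and the product of these
cosets lies in `g⟨p⟩` again.

That `alpha` does not depend on the chosen coset rests on uniqueness of the coset `g⟨p⟩`
through two distinct points, i.e. on two primitive elements with a common nontrivial power
agreeing up to inversion. In a free group, such elements generate a subgroup which is free
(Nielsen–Schreier) and has a nontrivial central element, hence is cyclic: an element commuting
with a generator `a` has a reduced word starting with `a±`, so no element `≠ 1` commutes
with two distinct generators.
-/

namespace FreeGroup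

variable {α : Type*}

theorem head_fst_eq_of_commute_of [DecidableEq α] {w : FreeGroup α} {a : α} (hw : w ≠ 1)
    (h : Commute w (of a)) : w.toWord.head?.map Prod.fst = some a := by
  obtain ⟨x, L, hL⟩ := List.exists_cons_of_ne_nil (mt toWord_eq_nil_iff.mp hw)
  rw [hL, List.head?_cons, Option.map_some, Option.some_inj]
  by_contra hx
  have hleft : (of a * w).toWord = (a, true) :: w.toWord := by
    rw [toWord_mul, toWord_of, hL, List.singleton_append]
    exact IsReduced.reduce_eq
      (isReduced_cons_cons.mpr ⟨fun h => absurd h.symm hx, hL ▸ isReduced_toWord⟩)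
  have hright : List.Sublist (w * of a).toWord (w.toWord ++ [(a, true)]) :=
    toWord_of a ▸ toWord_mul_sublist w (of a)
  rw [h.eq, hleft] at hright
  have hcycle := hright.eq_of_length (by simp)
  rw [hL, List.cons_append, List.cons.injEq] at hcycle
  exact hx (congrArg Prod.fst hcycle.1).symm

theorem eq_one_of_commute_of_commute {w : FreeGroup α} {a b : α} (hab : a ≠ b)
    (ha : Commute w (of a)) (hb : Commute w (of b)) : w = 1 := by
  classical
  by_contra hw
  exact hab (Option.some_injective _
    ((head_fst_eq_of_commute_of hw ha).symm.trans (head_fst_eq_of_commute_of hw hb)))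

theorem isCyclic_of_commute_of {z : FreeGroup α} (hz : z ≠ 1) (h : ∀ a, Commute z (of a)) :
    IsCyclic (FreeGroup α) := by
  have : Subsingleton α :=
    ⟨fun a b => by_contra fun hab => hz (eq_one_of_commute_of_commute hab (h a) (h b))⟩
  obtain ⟨g, hg⟩ : ∃ g : FreeGroup α, Set.range of ⊆ {g} := by
    rcases isEmpty_or_nonempty α with hα | ⟨⟨a⟩⟩
    · exact ⟨1, by simp [Set.range_eq_empty]⟩
    · exact ⟨of a, by rintro _ ⟨b, rfl⟩; rw [Subsingleton.elim b a]; rfl⟩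
  refine isCyclic_iff_exists_zpowers_eq_top.mpr ⟨g, eq_top_iff.mpr ?_⟩
  rw [← closure_range_of, Subgroup.closure_le]
  exact hg.trans (Set.singleton_subset_iff.mpr (Subgroup.mem_zpowers g))

end FreeGroup

namespace IsFreeGroup

variable {G : Type*} [Group G] [IsFreeGroup G]

theorem isCyclic_of_center_ne_bot (h : Subgroup.center G ≠ ⊥) : IsCyclic G := by
  obtain ⟨⟨z, hz⟩, hz1⟩ := Subgroup.ne_bot_iff_exists_ne_one.mp h
  let e := toFreeGroup G
  have : IsCyclic (FreeGroup (Generators G)) := by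
    refine FreeGroup.isCyclic_of_commute_of (z := e z) (by simpa [Subtype.ext_iff] using hz1)
      fun a => ?_
    have hza : Commute z (e.symm (FreeGroup.of a)) := (Subgroup.mem_center_iff.mp hz _).symm
    simpa using hza.map e
  exact isCyclic_of_surjective e.symm.toMonoidHom e.symm.surjective

theorem exists_zpow_eq_and_zpow_eq_of_zpow_eq {x y : G} {m n : ℤ} (h : x ^ m = y ^ n)
    (hne : x ^ m ≠ 1) : ∃ z : G, ∃ k l : ℤ, x = z ^ k ∧ y = z ^ l := by
  set H := Subgroup.closure {x, y}
  have hx : x ∈ H := Subgroup.subset_closure (by simp)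
  have hy : y ∈ H := Subgroup.subset_closure (by simp)
  have hcentralizer : H ≤ Subgroup.centralizer {x ^ m} := by
    rw [Subgroup.closure_le, Set.insert_subset_iff, Set.singleton_subset_iff,
      SetLike.mem_coe, SetLike.mem_coe, Subgroup.mem_centralizer_singleton_iff,
      Subgroup.mem_centralizer_singleton_iff]
    exact ⟨(Commute.self_zpow x m).eq, h ▸ (Commute.self_zpow y n).eq⟩
  have : IsCyclic H := by
    refine isCyclic_of_center_ne_bot (Subgroup.ne_bot_iff_exists_ne_one.mpr
      ⟨⟨⟨x ^ m, H.zpow_mem hx m⟩, Subgroup.mem_center_iff.mpr fun g => Subtype.ext ?_⟩, ?_⟩)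
    · exact Subgroup.mem_centralizer_singleton_iff.mp (hcentralizer g.2)
    · simpa [Subtype.ext_iff] using hne
  obtain ⟨t, ht⟩ := IsCyclic.exists_generator (α := H)
  obtain ⟨k, hk⟩ := Subgroup.mem_zpowers_iff.mp (ht ⟨x, hx⟩)
  obtain ⟨l, hl⟩ := Subgroup.mem_zpowers_iff.mp (ht ⟨y, hy⟩)
  exact ⟨t, k, l, by simpa using congrArg Subtype.val hk.symm,
    by simpa using congrArg Subtype.val hl.symm⟩

end IsFreeGroup

section

variable {A : Type*}

theorem IsPrimitiveElt.map_mulEquiv {p : FreeGroup A} (hp : IsPrimitiveElt p)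
    (φ : FreeGroup A ≃* FreeGroup A) : IsPrimitiveElt (φ p) := by
  refine ⟨by simpa using hp.1, fun w l hw => ?_⟩
  have hroot : (φ.symm w) ^ l = p := by rw [← map_zpow, hw, MulEquiv.symm_apply_apply]
  rcases hp.2 _ l hroot with h | h
  · exact Or.inl (by rw [← h, MulEquiv.apply_symm_apply])
  · exact Or.inr (by rw [← map_inv, ← h, MulEquiv.apply_symm_apply])

theorem IsPrimitiveElt.conj {p : FreeGroup A} (hp : IsPrimitiveElt p) (c : FreeGroup A) :
    IsPrimitiveElt (c * p * c⁻¹) :=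
  hp.map_mulEquiv (MulAut.conj c)

theorem IsPrimitiveElt.eq_or_eq_inv_of_zpow_eq_zpow {p q : FreeGroup A} (hp : IsPrimitiveElt p)
    (hq : IsPrimitiveElt q) {k m : ℤ} (h : p ^ k = q ^ m) (hne : p ^ k ≠ 1) :
    q = p ∨ q = p⁻¹ := by
  obtain ⟨z, s, t, hps, hqt⟩ := IsFreeGroup.exists_zpow_eq_and_zpow_eq_of_zpow_eq h hne
  obtain ⟨r, hzr⟩ : ∃ r : ℤ, z = p ^ r := by
    rcases hp.2 z s hps.symm with hz | hz
    exacts [⟨1, by rw [hz, zpow_one]⟩, ⟨-1, by rw [hz, zpow_neg_one]⟩]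
  rcases hq.2 p (r * t) (by rw [zpow_mul, ← hzr, hqt]) with h | h
  · exact Or.inl h.symm
  · exact Or.inr (by rw [h, inv_inv])

theorem coset_eq_of_mem {x g p : FreeGroup A} (hx : x ∈ coset g p) : coset g p = coset x p := by
  obtain ⟨i, rfl⟩ := hx
  ext y
  constructor
  · rintro ⟨k, rfl⟩
    exact ⟨k - i, by rw [mul_assoc, ← zpow_add, add_sub_cancel]⟩
  · rintro ⟨k, rfl⟩
    exact ⟨i + k, by rw [mul_assoc, ← zpow_add]⟩

theorem coset_inv (g p : FreeGroup A) : coset g p⁻¹ = coset g p := by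
  ext y
  constructor <;> rintro ⟨k, rfl⟩ <;> exact ⟨-k, by simp⟩

theorem coset_eq_coset_of_nontrivial {L : Set (FreeGroup A)} {v v' q q' : FreeGroup A}
    (hq : IsPrimitiveElt q) (hq' : IsPrimitiveElt q') (hL : L.Nontrivial)
    (hLq : L ⊆ coset v q) (hLq' : L ⊆ coset v' q') : coset v q = coset v' q' := by
  obtain ⟨a, ha, b, hb, hab⟩ := hL
  rw [coset_eq_of_mem (hLq ha), coset_eq_of_mem (hLq' ha)]
  obtain ⟨k, hk⟩ := (coset_eq_of_mem (hLq ha)).subset (hLq hb)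
  obtain ⟨m, hm⟩ := (coset_eq_of_mem (hLq' ha)).subset (hLq' hb)
  have hne : q ^ k ≠ 1 := fun h1 => hab (by rw [hk, h1, mul_one])
  rcases hq.eq_or_eq_inv_of_zpow_eq_zpow hq' (mul_left_cancel (hk.symm.trans hm)) hne
    with rfl | rfl
  · rfl
  · rw [coset_inv]

theorem alpha_empty : alpha (∅ : Set (FreeGroup A)) = ∅ := by
  simp [alpha]

theorem alpha_singleton (g : FreeGroup A) : alpha ({g} : Set (FreeGroup A)) = {g} := by
  rw [alpha, if_neg (Set.singleton_ne_empty g), if_pos ⟨g, rfl⟩]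

theorem subset_alpha (L : Set (FreeGroup A)) : L ⊆ alpha L := by
  unfold alpha
  split_ifs with h1 h2 h3
  · exact h1.subset
  · exact subset_rfl
  · exact h3.choose_spec.choose_spec.2
  · exact Set.subset_univ L

open scoped Classical in
theorem alpha_of_nontrivial {L : Set (FreeGroup A)} (hL : L.Nontrivial) :
    alpha L = if h : ∃ g p : FreeGroup A, IsPrimitiveElt p ∧ L ⊆ coset g p then
      coset h.choose h.choose_spec.choose else Set.univ := by
  rw [alpha, if_neg hL.nonempty.ne_empty,
    if_neg fun ⟨g, hg⟩ => hL.not_subsingleton (hg ▸ Set.subsingleton_singleton)]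

theorem alpha_eq_coset {L : Set (FreeGroup A)} {g p : FreeGroup A} (hL : L.Nontrivial)
    (hp : IsPrimitiveElt p) (hLp : L ⊆ coset g p) : alpha L = coset g p := by
  have h : ∃ g p : FreeGroup A, IsPrimitiveElt p ∧ L ⊆ coset g p := ⟨g, p, hp, hLp⟩
  rw [alpha_of_nontrivial hL, dif_pos h]
  exact coset_eq_coset_of_nontrivial h.choose_spec.choose_spec.1 hp hL
    h.choose_spec.choose_spec.2 hLp

theorem alpha_eq_univ {L : Set (FreeGroup A)} (hL : L.Nontrivial)
    (h : ¬∃ g p : FreeGroup A, IsPrimitiveElt p ∧ L ⊆ coset g p) : alpha L = Set.univ := by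
  rw [alpha_of_nontrivial hL, dif_neg h]

theorem alpha_subset_coset {L : Set (FreeGroup A)} {g p : FreeGroup A} (hp : IsPrimitiveElt p)
    (hLp : L ⊆ coset g p) : alpha L ⊆ coset g p := by
  rcases L.subsingleton_or_nontrivial with hL | hL
  · rcases hL.eq_empty_or_singleton with rfl | ⟨x, rfl⟩
    · simp [alpha_empty]
    · rwa [alpha_singleton]
  · rw [alpha_eq_coset hL hp hLp]

theorem alpha_eq_of_subset_of_subset_alpha {M N : Set (FreeGroup A)} (hMN : M ⊆ N)
    (hN : N ⊆ alpha M) : alpha N = alpha M := by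
  rcases M.subsingleton_or_nontrivial with hM | hM
  · rcases hM.eq_empty_or_singleton with rfl | ⟨x, rfl⟩
    · rw [alpha_empty, Set.subset_empty_iff] at hN
      rw [hN]
    · rw [alpha_singleton] at hN
      rw [hN.antisymm hMN]
  by_cases h : ∃ g p : FreeGroup A, IsPrimitiveElt p ∧ M ⊆ coset g p
  · obtain ⟨g, p, hp, hMp⟩ := h
    rw [alpha_eq_coset hM hp hMp] at hN ⊢
    exact alpha_eq_coset (hM.mono hMN) hp hN
  · rw [alpha_eq_univ hM h, alpha_eq_univ (hM.mono hMN)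
      fun ⟨g, p, hp, hNp⟩ => h ⟨g, p, hp, hMN.trans hNp⟩]

theorem alpha_mul_alpha_subset_coset {L₁ L₂ : Set (FreeGroup A)} {g p : FreeGroup A}
    (hp : IsPrimitiveElt p) (hL : L₁ * L₂ ⊆ coset g p) {a b : FreeGroup A} (ha : a ∈ L₁)
    (hb : b ∈ L₂) : alpha L₁ * alpha L₂ ⊆ coset g p := by
  obtain ⟨i, hi⟩ := hL (Set.mul_mem_mul ha hb)
  have h₁ : L₁ ⊆ coset (g * b⁻¹) (b * p * b⁻¹) := fun x hx => by
    obtain ⟨k, hk⟩ := hL (Set.mul_mem_mul hx hb)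
    exact ⟨k, by rw [conj_zpow, eq_mul_inv_of_mul_eq hk.symm]; group⟩
  have h₂ : L₂ ⊆ coset (a⁻¹ * g) p := fun y hy => by
    obtain ⟨k, hk⟩ := hL (Set.mul_mem_mul ha hy)
    exact ⟨k, by rw [mul_assoc, ← hk, inv_mul_cancel_left]⟩
  rintro _ ⟨x, hx, y, hy, rfl⟩
  obtain ⟨j, rfl⟩ := alpha_subset_coset (hp.conj b) h₁ hx
  obtain ⟨k, rfl⟩ := alpha_subset_coset hp h₂ hy
  refine ⟨j - i + k, ?_⟩
  rw [conj_zpow, eq_mul_inv_of_mul_eq hi.symm, zpow_add, zpow_sub]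
  group

theorem alpha_mul_alpha_subset_alpha_mul (L₁ L₂ : Set (FreeGroup A)) :
    alpha L₁ * alpha L₂ ⊆ alpha (L₁ * L₂) := by
  rcases (L₁ * L₂).subsingleton_or_nontrivial with h | h
  · rcases L₁.eq_empty_or_nonempty with rfl | ⟨a, ha⟩
    · simp [alpha_empty]
    rcases L₂.eq_empty_or_nonempty with rfl | ⟨b, hb⟩
    · simp [alpha_empty]
    have h₁ : L₁ = {a} := (Set.not_nontrivial_iff.mp fun h₁ =>
      h.not_nontrivial (h₁.mul_right ⟨b, hb⟩)).eq_singleton_of_mem ha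
    have h₂ : L₂ = {b} := (Set.not_nontrivial_iff.mp fun h₂ =>
      h.not_nontrivial (h₂.mul_left ⟨a, ha⟩)).eq_singleton_of_mem hb
    rw [h₁, h₂, alpha_singleton, alpha_singleton, Set.singleton_mul_singleton, alpha_singleton]
  obtain ⟨_, ⟨a, ha, b, hb, -⟩, -⟩ := id h
  by_cases hc : ∃ g p : FreeGroup A, IsPrimitiveElt p ∧ L₁ * L₂ ⊆ coset g p
  · obtain ⟨g, p, hp, hL⟩ := hc
    rw [alpha_eq_coset h hp hL]
    exact alpha_mul_alpha_subset_coset hp hL ha hb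
  · rw [alpha_eq_univ h hc]
    exact Set.subset_univ _

end

theorem stmt13 {A : Type*} (L₁ L₂ : Set (FreeGroup A)) :
    alpha (L₁ * L₂) = alpha (alpha L₁ * alpha L₂) :=
  (alpha_eq_of_subset_of_subset_alpha (Set.mul_subset_mul (subset_alpha L₁) (subset_alpha L₂))
    (alpha_mul_alpha_subset_alpha_mul L₁ L₂)).symm
end
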